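/- For every real r with 1 ≤ r < ℓ* and every λ > 0, one has (λt)^r / Φ*(t) → 0 as t → ∞; that is, the N-function Ψ(t) = t^r/r grows essentially more slowly than the Sobolev conjugate Φ*. -/

import Mathlib

open Filter Set MeasureTheory

/-- The N-function `Φ(t) = ∫₀ᵗ s·φ(s) ds`. -/
noncomputable def Phi (φ : ℝ → ℝ) (t : ℝ) : ℝ := ∫ s in (0:ℝ)..t, s * φ s

/-- `G(t) = ∫₀ᵗ Φ⁻¹(s)·s^{−(N+1)/N} ds`, whose inverse is the Sobolev conjugate `Φ*`. -/
noncomputable def sobG (Phinv : ℝ → ℝ) (N t : ℝ) : ℝ :=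
  ∫ s in (0:ℝ)..t, Phinv s * s ^ (-(N + 1) / N)

/-!
Write `h(t) = t φ(t)`. By (φ3), `h'(t) t^(2-ℓ)` increases and `h'(t) t^(2-m)` decreases on
`(0, ∞)`, so `h'(t) ≥ h'(1) t^(m-2)` on `(0, 1]` and `h'(t) ≥ h'(1) t^(ℓ-2)` on `[1, ∞)`, where
`h'(1) > 0` by the mean value theorem on `[1, 2]`. Integrating twice gives `Φ(t) ≳ t^m` near `0`
and `Φ(t) ≳ t^ℓ` at infinity, hence `Φ⁻¹(s) ≲ s^(1/m) + s^(1/ℓ)` and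
`G(x) ≲ x^(1/m - 1/N) + x^(1/ℓ - 1/N)`. As `1/ℓ - 1/N = 1/ℓ*`, inverting `G` gives
`Φ*(t) ≳ t^ℓ*` for large `t`, which outgrows `(λt)^r` when `r < ℓ*`.
-/

open Real Topology

lemma hasDerivAt_deriv_of_contDiffOn_two {f : ℝ → ℝ} {U : Set ℝ} (hf : ContDiffOn ℝ 2 f U)
    (hU : IsOpen U) {x : ℝ} (hx : x ∈ U) :
    HasDerivAt f (deriv f x) x ∧ HasDerivAt (deriv f) (deriv (deriv f) x) x :=
  ⟨((hf.contDiffAt (hU.mem_nhds hx)).differentiableAt (by norm_num)).hasDerivAt,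
    (((hf.deriv_of_isOpen hU (m := 1) (by norm_num)).contDiffAt
      (hU.mem_nhds hx)).differentiableAt (by norm_num)).hasDerivAt⟩

lemma sub_le_sub_of_hasDerivAt_le {f g f' g' : ℝ → ℝ} {a b : ℝ} (hab : a ≤ b)
    (hf : ∀ x ∈ Icc a b, HasDerivAt f (f' x) x) (hg : ∀ x ∈ Icc a b, HasDerivAt g (g' x) x)
    (h : ∀ x ∈ Ioo a b, g' x ≤ f' x) : g b - g a ≤ f b - f a := by
  have hmono : MonotoneOn (f - g) (Icc a b) := by
    refine monotoneOn_of_hasDerivWithinAt_nonneg (f' := f' - g') (convex_Icc a b)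
      (fun x hx => ((hf x hx).sub (hg x hx)).continuousAt.continuousWithinAt)
      (fun x hx => ?_) (fun x hx => ?_)
    · rw [interior_Icc] at hx ⊢
      exact ((hf x (Ioo_subset_Icc_self hx)).sub (hg x (Ioo_subset_Icc_self hx))).hasDerivWithinAt
    · rw [interior_Icc] at hx
      exact sub_nonneg.2 (h x hx)
  have := hmono (left_mem_Icc.2 hab) (right_mem_Icc.2 hab) hab
  simp only [Pi.sub_apply] at this
  linarith

section PowerWeights

variable {g g' : ℝ → ℝ} {c s t : ℝ}

lemma monotoneOn_mul_rpow_neg (hg : ∀ x > 0, HasDerivAt g (g' x) x)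
    (h : ∀ x > 0, c * g x ≤ x * g' x) : MonotoneOn (fun x => g x * x ^ (-c)) (Ioi 0) := by
  have hd : ∀ x > 0, HasDerivAt (fun x => g x * x ^ (-c))
      (x ^ (-c - 1) * (x * g' x - c * g x)) x := by
    intro x hx
    have hx' : x ^ (-c) = x * x ^ (-c - 1) := by
      conv_lhs => rw [show -c = 1 + (-c - 1) by ring, rpow_add hx, rpow_one]
    refine ((hg x hx).mul (hasDerivAt_rpow_const (p := -c) (Or.inl hx.ne'))).congr_deriv ?_
    rw [hx']
    ring
  refine monotoneOn_of_hasDerivWithinAt_nonneg (convex_Ioi 0)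
    (f' := fun x => x ^ (-c - 1) * (x * g' x - c * g x))
    (fun x hx => (hd x hx).continuousAt.continuousWithinAt) (fun x hx => ?_) (fun x hx => ?_)
  · rw [interior_Ioi] at hx ⊢
    exact (hd x hx).hasDerivWithinAt
  · rw [interior_Ioi] at hx
    exact mul_nonneg (rpow_nonneg hx.out.le _) (sub_nonneg.2 (h x hx))

lemma mul_rpow_le_mul_rpow_of_le_mul_deriv (hg : ∀ x > 0, HasDerivAt g (g' x) x)
    (h : ∀ x > 0, c * g x ≤ x * g' x) (hs : 0 < s) (hst : s ≤ t) :
    g s * t ^ c ≤ g t * s ^ c := by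
  have ht : 0 < t := hs.trans_le hst
  have := monotoneOn_mul_rpow_neg hg h (mem_Ioi.2 hs) (mem_Ioi.2 ht) hst
  simp only [rpow_neg hs.le, rpow_neg ht.le, ← div_eq_mul_inv] at this
  rwa [div_le_div_iff₀ (rpow_pos_of_pos hs c) (rpow_pos_of_pos ht c)] at this

lemma mul_rpow_le_mul_rpow_of_mul_deriv_le (hg : ∀ x > 0, HasDerivAt g (g' x) x)
    (h : ∀ x > 0, x * g' x ≤ c * g x) (hs : 0 < s) (hst : s ≤ t) :
    g t * s ^ c ≤ g s * t ^ c := by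
  have := mul_rpow_le_mul_rpow_of_le_mul_deriv (g := -g) (g' := -g')
    (fun x hx => (hg x hx).neg) (fun x hx => by simpa using h x hx) hs hst
  simpa only [Pi.neg_apply, neg_mul, neg_le_neg_iff] using this

end PowerWeights

lemma min_mul_le_add_mul_sub_one {a b x : ℝ} (hx : 1 ≤ x) :
    min a b * x ≤ a + b * (x - 1) := by
  nlinarith [min_le_left a b, min_le_right a b]

section TwiceDifferentiable

variable {h : ℝ → ℝ} {ℓ m : ℝ}

lemma deriv_one_pos_of_lt (hd : ∀ t > 0, HasDerivAt h (deriv h t) t)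
    (hd2 : ∀ t > 0, HasDerivAt (deriv h) (deriv (deriv h) t) t)
    (hup : ∀ t > 0, t * deriv (deriv h) t ≤ (m - 2) * deriv h t) (h12 : h 1 < h 2) :
    0 < deriv h 1 := by
  obtain ⟨ξ, hξ, hslope⟩ := exists_hasDerivAt_eq_slope h (deriv h) one_lt_two
    (fun x hx => (hd x (by linarith [hx.1])).continuousAt.continuousWithinAt)
    (fun x hx => hd x (by linarith [hx.1]))
  have hξpos : 0 < deriv h ξ := by
    rw [hslope]
    exact div_pos (sub_pos.2 h12) (by norm_num)
  have hcmp := mul_rpow_le_mul_rpow_of_mul_deriv_le hd2 hup one_pos hξ.1.le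
  rw [one_rpow, mul_one] at hcmp
  exact pos_of_mul_pos_left (hξpos.trans_le hcmp) (rpow_nonneg (by linarith [hξ.1]) _)

lemma div_mul_rpow_le_of_mem_Ioc (hd : ∀ t > 0, HasDerivAt h (deriv h t) t)
    (hd2 : ∀ t > 0, HasDerivAt (deriv h) (deriv (deriv h) t) t)
    (hup : ∀ t > 0, t * deriv (deriv h) t ≤ (m - 2) * deriv h t) (hm : 1 < m)
    (h0 : Tendsto h (𝓝[>] 0) (𝓝 0)) {t : ℝ} (ht : t ∈ Ioc 0 1) :
    deriv h 1 / (m - 1) * t ^ (m - 1) ≤ h t := by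
  set k := deriv h 1 / (m - 1)
  have hcmp : ∀ s ∈ Ioo 0 t, k * t ^ (m - 1) - k * s ^ (m - 1) ≤ h t - h s := by
    intro s hs
    refine sub_le_sub_of_hasDerivAt_le hs.2.le (fun x hx => hd x (hs.1.trans_le hx.1))
      (fun x hx => (hasDerivAt_rpow_const (Or.inl (hs.1.trans_le hx.1).ne')).const_mul k)
      (fun x hx => ?_)
    have hx1 : x ≤ 1 := by linarith [hx.2, ht.2]
    have := mul_rpow_le_mul_rpow_of_mul_deriv_le hd2 hup (hs.1.trans hx.1) hx1
    rw [one_rpow, mul_one] at this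
    calc k * ((m - 1) * x ^ (m - 1 - 1)) = deriv h 1 * x ^ (m - 2) := by
          rw [show m - 1 - 1 = m - 2 by ring]
          have : m - 1 ≠ 0 := by linarith
          simp only [k]
          field_simp
      _ ≤ deriv h x := this
  have hpow : Tendsto (fun s : ℝ => s ^ (m - 1)) (𝓝[>] 0) (𝓝 0) := by
    simpa [zero_rpow (by linarith : m - 1 ≠ 0)] using
      ((continuousAt_rpow_const 0 (m - 1) (Or.inr (by linarith))).tendsto).mono_left
        nhdsWithin_le_nhds
  have hlim := le_of_tendsto_of_tendsto
    (tendsto_const_nhds.sub (hpow.const_mul k)) (tendsto_const_nhds.sub h0)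
    (eventually_of_mem (Ioo_mem_nhdsGT ht.1) hcmp)
  simpa using hlim

lemma add_div_mul_rpow_sub_one_le (hd : ∀ t > 0, HasDerivAt h (deriv h t) t)
    (hd2 : ∀ t > 0, HasDerivAt (deriv h) (deriv (deriv h) t) t)
    (hlow : ∀ t > 0, (ℓ - 2) * deriv h t ≤ t * deriv (deriv h) t) (hℓ : 1 < ℓ)
    {t : ℝ} (ht : 1 ≤ t) :
    h 1 + deriv h 1 / (ℓ - 1) * (t ^ (ℓ - 1) - 1) ≤ h t := by
  set k := deriv h 1 / (ℓ - 1)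
  have hcmp := sub_le_sub_of_hasDerivAt_le ht (fun x hx => hd x (by linarith [hx.1]))
    (fun x hx => (hasDerivAt_rpow_const (p := ℓ - 1)
      (Or.inl (by linarith [hx.1] : x ≠ 0))).const_mul k) (fun x hx => ?_)
  · rw [one_rpow] at hcmp
    linarith
  have := mul_rpow_le_mul_rpow_of_le_mul_deriv hd2 hlow one_pos hx.1.le
  rw [one_rpow, mul_one] at this
  calc k * ((ℓ - 1) * x ^ (ℓ - 1 - 1)) = deriv h 1 * x ^ (ℓ - 2) := by
        rw [show ℓ - 1 - 1 = ℓ - 2 by ring]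
        have : ℓ - 1 ≠ 0 := by linarith
        simp only [k]
        field_simp
    _ ≤ deriv h x := this

lemma exists_mul_rpow_le_of_deriv (hd : ∀ t > 0, HasDerivAt h (deriv h t) t)
    (hd2 : ∀ t > 0, HasDerivAt (deriv h) (deriv (deriv h) t) t)
    (hlow : ∀ t > 0, (ℓ - 2) * deriv h t ≤ t * deriv (deriv h) t)
    (hup : ∀ t > 0, t * deriv (deriv h) t ≤ (m - 2) * deriv h t) (hℓ : 1 < ℓ) (hm : 1 < m)
    (h0 : Tendsto h (𝓝[>] 0) (𝓝 0)) (h12 : h 1 < h 2) :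
    ∃ k > 0, (∀ t ∈ Ioc 0 1, k * t ^ (m - 1) ≤ h t) ∧ ∀ t, 1 ≤ t → k * t ^ (ℓ - 1) ≤ h t := by
  have hd1 := deriv_one_pos_of_lt hd hd2 hup h12
  set k := min (deriv h 1 / (m - 1)) (deriv h 1 / (ℓ - 1))
  have hnear := fun t ht => div_mul_rpow_le_of_mem_Ioc hd hd2 hup hm h0 (t := t) ht
  refine ⟨k, lt_min (by bound) (by bound), fun t ht => ?_, fun t ht => ?_⟩
  · exact (mul_le_mul_of_nonneg_right (min_le_left _ _) (rpow_nonneg ht.1.le _)).trans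
      (hnear t ht)
  · have hk1 : k ≤ h 1 := by
      have h1 := hnear 1 ⟨one_pos, le_rfl⟩
      rw [one_rpow, mul_one] at h1
      exact (min_le_left _ _).trans h1
    calc k * t ^ (ℓ - 1) ≤ min (h 1) (deriv h 1 / (ℓ - 1)) * t ^ (ℓ - 1) :=
          mul_le_mul_of_nonneg_right (le_min hk1 (min_le_right _ _))
            (rpow_nonneg (by linarith) _)
      _ ≤ h 1 + deriv h 1 / (ℓ - 1) * (t ^ (ℓ - 1) - 1) :=
          min_mul_le_add_mul_sub_one (one_le_rpow ht (by linarith))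
      _ ≤ h t := add_div_mul_rpow_sub_one_le hd hd2 hlow hℓ ht

end TwiceDifferentiable

lemma monotoneOn_Ici_of_monotoneOn_Ioi {f : ℝ → ℝ} {a : ℝ} (hf : MonotoneOn f (Ioi a))
    (ha : ∀ x > a, f a ≤ f x) : MonotoneOn f (Ici a) := by
  intro x hx y hy hxy
  rcases (mem_Ici.1 hx).eq_or_lt with rfl | hx'
  · rcases (mem_Ici.1 hy).eq_or_lt with rfl | hy'
    exacts [le_rfl, ha y hy']
  · exact hf hx' (hx'.trans_le hxy) hxy

lemma exists_mul_rpow_le_integral {h : ℝ → ℝ} {ℓ m k : ℝ} (hℓ : 0 < ℓ) (hm : 0 < m)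
    (hk : 0 < k) (hmono : MonotoneOn h (Ici 0)) (h0 : ∀ t ∈ Ioc 0 1, k * t ^ (m - 1) ≤ h t)
    (h1 : ∀ t, 1 ≤ t → k * t ^ (ℓ - 1) ≤ h t) :
    ∃ μ > 0, (∀ t ∈ Icc 0 1, μ * t ^ m ≤ ∫ s in 0..t, h s) ∧
      ∀ t, 1 ≤ t → μ * t ^ ℓ ≤ ∫ s in 0..t, h s := by
  have hint : ∀ a b, 0 ≤ a → a ≤ b → IntervalIntegrable h volume a b := fun a b ha hab =>
    (hmono.mono (by rw [uIcc_of_le hab]; exact fun x hx => ha.trans hx.1)).intervalIntegrable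
  have hpow : ∀ p a b : ℝ, 0 < p →
      IntervalIntegrable (fun s => k * s ^ (p - 1)) volume a b ∧
      ∫ s in a..b, k * s ^ (p - 1) = k / p * (b ^ p - a ^ p) := by
    intro p a b hp
    refine ⟨(intervalIntegral.intervalIntegrable_rpow' (by linarith)).const_mul k, ?_⟩
    rw [intervalIntegral.integral_const_mul, integral_rpow (Or.inl (by linarith)),
      sub_add_cancel]
    ring
  have hsmall : ∀ t ∈ Icc (0 : ℝ) 1, k / m * t ^ m ≤ ∫ s in 0..t, h s := by
    intro t ht
    calc k / m * t ^ m = ∫ s in 0..t, k * s ^ (m - 1) := by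
          rw [(hpow m 0 t hm).2, zero_rpow hm.ne', sub_zero]
      _ ≤ ∫ s in 0..t, h s :=
          intervalIntegral.integral_mono_on_of_le_Ioo ht.1 (hpow m 0 t hm).1
            (hint 0 t le_rfl ht.1) fun s hs => h0 s ⟨hs.1, hs.2.le.trans ht.2⟩
  have hlarge : ∀ t, 1 ≤ t → (∫ s in 0..1, h s) + k / ℓ * (t ^ ℓ - 1) ≤ ∫ s in 0..t, h s := by
    intro t ht
    rw [← intervalIntegral.integral_add_adjacent_intervals (hint 0 1 le_rfl zero_le_one)
      (hint 1 t zero_le_one ht)]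
    gcongr
    calc k / ℓ * (t ^ ℓ - 1) = ∫ s in 1..t, k * s ^ (ℓ - 1) := by
          rw [(hpow ℓ 1 t hℓ).2, one_rpow]
      _ ≤ ∫ s in 1..t, h s :=
          intervalIntegral.integral_mono_on_of_le_Ioo ht (hpow ℓ 1 t hℓ).1
            (hint 1 t zero_le_one ht) fun s hs => h1 s hs.1.le
  refine ⟨min (k / m) (k / ℓ), lt_min (by positivity) (by positivity), fun t ht => ?_,
    fun t ht => ?_⟩
  · exact (mul_le_mul_of_nonneg_right (min_le_left _ _) (rpow_nonneg ht.1 _)).trans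
      (hsmall t ht)
  · have hμ1 : min (k / m) (k / ℓ) ≤ ∫ s in 0..1, h s := by
      have := hsmall 1 ⟨zero_le_one, le_rfl⟩
      rw [one_rpow, mul_one] at this
      exact (min_le_left _ _).trans this
    calc min (k / m) (k / ℓ) * t ^ ℓ ≤ min (∫ s in 0..1, h s) (k / ℓ) * t ^ ℓ :=
          mul_le_mul_of_nonneg_right (le_min hμ1 (min_le_right _ _))
            (rpow_nonneg (by linarith) _)
      _ ≤ (∫ s in 0..1, h s) + k / ℓ * (t ^ ℓ - 1) :=
          min_mul_le_add_mul_sub_one (one_le_rpow ht hℓ.le)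
      _ ≤ ∫ s in 0..t, h s := hlarge t ht

lemma le_rpow_inv_add_rpow_inv {F : ℝ → ℝ} {ℓ m μ t : ℝ} (hℓ : 0 < ℓ) (hm : 0 < m)
    (hμ : 0 < μ) (h0 : ∀ t ∈ Icc 0 1, μ * t ^ m ≤ F t) (h1 : ∀ t, 1 ≤ t → μ * t ^ ℓ ≤ F t)
    (ht : 0 ≤ t) : t ≤ (F t / μ) ^ m⁻¹ + (F t / μ) ^ ℓ⁻¹ := by
  have key : ∀ p : ℝ, 0 < p → μ * t ^ p ≤ F t → 0 ≤ F t / μ ∧ t ≤ (F t / μ) ^ p⁻¹ := by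
    intro p hp hF
    have hF0 : 0 ≤ F t / μ := div_nonneg ((mul_nonneg hμ.le (rpow_nonneg ht _)).trans hF) hμ.le
    exact ⟨hF0, (le_rpow_inv_iff_of_pos ht hF0 hp).2 (by rwa [le_div_iff₀' hμ])⟩
  rcases le_total t 1 with ht1 | ht1
  · obtain ⟨hF0, hle⟩ := key m hm (h0 t ⟨ht, ht1⟩)
    linarith [rpow_nonneg hF0 ℓ⁻¹]
  · obtain ⟨hF0, hle⟩ := key ℓ hℓ (h1 t ht1)
    linarith [rpow_nonneg hF0 m⁻¹]

lemma integral_le_div_mul_rpow_add {f : ℝ → ℝ} {a b A B x : ℝ} (ha : 0 < a) (hb : 0 < b)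
    (hA : 0 ≤ A) (hB : 0 ≤ B) (hx : 0 ≤ x)
    (hf : ∀ s ∈ Ioo 0 x, f s ≤ A * s ^ (a - 1) + B * s ^ (b - 1)) :
    ∫ s in 0..x, f s ≤ A / a * x ^ a + B / b * x ^ b := by
  have hga : IntervalIntegrable (fun s => A * s ^ (a - 1)) volume 0 x :=
    (intervalIntegral.intervalIntegrable_rpow' (by linarith)).const_mul A
  have hgb : IntervalIntegrable (fun s => B * s ^ (b - 1)) volume 0 x :=
    (intervalIntegral.intervalIntegrable_rpow' (by linarith)).const_mul B
  have heval :
      ∫ s in 0..x, (A * s ^ (a - 1) + B * s ^ (b - 1)) = A / a * x ^ a + B / b * x ^ b := by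
    rw [intervalIntegral.integral_add hga hgb, intervalIntegral.integral_const_mul,
      intervalIntegral.integral_const_mul, integral_rpow (Or.inl (by linarith)),
      integral_rpow (Or.inl (by linarith)), sub_add_cancel, sub_add_cancel,
      zero_rpow ha.ne', zero_rpow hb.ne']
    ring
  -- if `f` is not integrable, its integral is the junk value `0`
  by_cases hfi : IntervalIntegrable f volume 0 x
  · exact (intervalIntegral.integral_mono_on_of_le_Ioo hx hfi (hga.add hgb) hf).trans heval.le
  · rw [intervalIntegral.integral_undef hfi]
    positivity

lemma exists_sobG_le {F Phinv : ℝ → ℝ} {ℓ m μ N : ℝ} (hℓ : 0 < ℓ) (hm : 0 < m) (hℓN : ℓ < N)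
    (hmN : m < N) (hμ : 0 < μ) (h0 : ∀ t ∈ Icc 0 1, μ * t ^ m ≤ F t)
    (h1 : ∀ t, 1 ≤ t → μ * t ^ ℓ ≤ F t)
    (hinv : ∀ s ∈ Ici (0 : ℝ), 0 ≤ Phinv s ∧ F (Phinv s) = s) :
    ∃ A B : ℝ, 0 ≤ A ∧ 0 ≤ B ∧ ∀ x, 0 ≤ x →
      sobG Phinv N x ≤ A * x ^ (m⁻¹ - N⁻¹) + B * x ^ (ℓ⁻¹ - N⁻¹) := by
  have hN : 0 < N := hm.trans hmN
  have ha : 0 < m⁻¹ - N⁻¹ := sub_pos.2 ((inv_lt_inv₀ hN hm).2 hmN)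
  have hb : 0 < ℓ⁻¹ - N⁻¹ := sub_pos.2 ((inv_lt_inv₀ hN hℓ).2 hℓN)
  have hexp : ∀ p s : ℝ, 0 < s →
      s ^ p / μ ^ p * s ^ (-(N + 1) / N) = (μ ^ p)⁻¹ * s ^ (p - N⁻¹ - 1) := by
    intro p s hs
    rw [div_eq_inv_mul, mul_assoc, ← rpow_add hs]
    congr 2
    field_simp
    ring
  refine ⟨(μ ^ m⁻¹)⁻¹ / (m⁻¹ - N⁻¹), (μ ^ ℓ⁻¹)⁻¹ / (ℓ⁻¹ - N⁻¹), by positivity, by positivity,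
    fun x hx => integral_le_div_mul_rpow_add ha hb (by positivity) (by positivity) hx ?_⟩
  intro s hs
  obtain ⟨hinv0, hinvF⟩ := hinv s (mem_Ici.2 hs.1.le)
  have hle := le_rpow_inv_add_rpow_inv hℓ hm hμ h0 h1 hinv0
  rw [hinvF, div_rpow hs.1.le hμ.le, div_rpow hs.1.le hμ.le] at hle
  calc Phinv s * s ^ (-(N + 1) / N)
      ≤ (s ^ m⁻¹ / μ ^ m⁻¹ + s ^ ℓ⁻¹ / μ ^ ℓ⁻¹) * s ^ (-(N + 1) / N) :=
        mul_le_mul_of_nonneg_right hle (rpow_nonneg hs.1.le _)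
    _ = _ := by rw [add_mul, hexp _ _ hs.1, hexp _ _ hs.1]

lemma exists_mul_rpow_le_of_le_mul_rpow_add {X : ℝ → ℝ} {a b A B : ℝ} (ha : 0 < a)
    (hab : a ≤ b) (hA : 0 ≤ A) (hB : 0 ≤ B)
    (hX : ∀ t, 0 ≤ t → 0 ≤ X t ∧ t ≤ A * X t ^ a + B * X t ^ b) :
    ∃ c > 0, ∀ᶠ t in atTop, c * t ^ b⁻¹ ≤ X t := by
  set C := A + B + 1
  have hC : 0 < C := by positivity
  have hb : 0 < b := ha.trans_le hab
  refine ⟨((2 * C) ^ b⁻¹)⁻¹, by positivity, ?_⟩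
  filter_upwards [eventually_ge_atTop (2 * C)] with t ht
  have ht0 : 0 ≤ t := by linarith
  obtain ⟨hX0, hXt⟩ := hX t ht0
  have hXb : 0 ≤ X t ^ b := rpow_nonneg hX0 b
  have hXa : X t ^ a ≤ 1 + X t ^ b := by
    rcases le_total (X t) 1 with h1 | h1
    · linarith [rpow_le_one hX0 h1 ha.le]
    · linarith [rpow_le_rpow_of_exponent_le h1 hab]
  have hle : t / (2 * C) ≤ X t ^ b := by
    rw [div_le_iff₀ (by positivity)]
    nlinarith [mul_le_mul_of_nonneg_left hXa hA]
  calc ((2 * C) ^ b⁻¹)⁻¹ * t ^ b⁻¹ = (t / (2 * C)) ^ b⁻¹ := by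
        rw [div_rpow ht0 (by positivity), div_eq_inv_mul]
    _ ≤ X t := (rpow_inv_le_iff_of_pos (by positivity) hX0 hb).2 hle

lemma tendsto_rpow_div_of_mul_rpow_le {X : ℝ → ℝ} {c p r : ℝ} (hc : 0 < c) (hrp : r < p)
    (hX : ∀ᶠ t in atTop, c * t ^ p ≤ X t) : Tendsto (fun t => t ^ r / X t) atTop (𝓝 0) := by
  have hlim : Tendsto (fun t : ℝ => c⁻¹ * t ^ (r - p)) atTop (𝓝 0) := by
    simpa [neg_sub] using (tendsto_rpow_neg_atTop (sub_pos.2 hrp)).const_mul c⁻¹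
  refine tendsto_of_tendsto_of_tendsto_of_le_of_le' tendsto_const_nhds hlim ?_ ?_
  all_goals filter_upwards [hX, eventually_gt_atTop 0] with t hXt ht
  · exact div_nonneg (rpow_nonneg ht.le r) ((by positivity : 0 ≤ c * t ^ p).trans hXt)
  · calc t ^ r / X t ≤ t ^ r / (c * t ^ p) :=
          div_le_div_of_nonneg_left (rpow_nonneg ht.le r) (by positivity) hXt
      _ = c⁻¹ * t ^ (r - p) := by
          rw [rpow_sub ht]
          field_simp

theorem stmt_17_general (φ : ℝ → ℝ) (ℓ m : ℝ)
    (hφ_pos : ∀ t > 0, 0 < φ t)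
    (hφ_C2 : ContDiffOn ℝ 2 φ (Set.Ioi 0))
    (hℓ : 1 < ℓ) (hℓm : ℓ ≤ m)
    (hφ1₀ : Tendsto (fun t => t * φ t) (nhdsWithin 0 (Set.Ioi 0)) (nhds 0))
    (hφ2 : StrictMonoOn (fun t => t * φ t) (Set.Ioi 0))
    (hφ3 : ∀ t > 0,
      (ℓ - 2) * deriv (fun s => s * φ s) t ≤ t * deriv (deriv (fun s => s * φ s)) t ∧
      t * deriv (deriv (fun s => s * φ s)) t ≤ (m - 2) * deriv (fun s => s * φ s) t)
    (N : ℝ) (hN : m < N)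
    (Phinv : ℝ → ℝ)
    (hPhinv : ∀ s ∈ Set.Ici (0:ℝ), 0 ≤ Phinv s ∧ Phi φ (Phinv s) = s)
    (Phistar : ℝ → ℝ)
    (hPhistar : ∀ t ∈ Set.Ici (0:ℝ), 0 ≤ Phistar t ∧ sobG Phinv N (Phistar t) = t)
    (lstar : ℝ) (hlstar : lstar = ℓ * N / (N - ℓ)) :
    ∀ r : ℝ, 1 ≤ r → r < lstar → ∀ lam : ℝ, 0 < lam →
      Tendsto (fun t => (lam * t) ^ r / Phistar t) atTop (nhds 0) := by
  intro r _ hrl lam hlam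
  have hm : 1 < m := hℓ.trans_le hℓm
  have hH : ∀ t > 0, HasDerivAt (fun s => s * φ s) (deriv (fun s => s * φ s) t) t ∧
      HasDerivAt (deriv (fun s => s * φ s)) (deriv (deriv (fun s => s * φ s)) t) t :=
    fun t ht => hasDerivAt_deriv_of_contDiffOn_two (contDiffOn_id.mul hφ_C2) isOpen_Ioi ht
  obtain ⟨k, hk, hk0, hk1⟩ := exists_mul_rpow_le_of_deriv (fun t ht => (hH t ht).1)
    (fun t ht => (hH t ht).2) (fun t ht => (hφ3 t ht).1) (fun t ht => (hφ3 t ht).2) hℓ hm hφ1₀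
    (hφ2 (mem_Ioi.2 one_pos) (mem_Ioi.2 two_pos) one_lt_two)
  have hHmono : MonotoneOn (fun t => t * φ t) (Ici 0) :=
    monotoneOn_Ici_of_monotoneOn_Ioi hφ2.monotoneOn fun t ht => by
      simpa using (mul_pos ht (hφ_pos t ht)).le
  obtain ⟨μ, hμ, hμ0, hμ1⟩ :=
    exists_mul_rpow_le_integral (by linarith) (by linarith) hk hHmono hk0 hk1
  obtain ⟨A, B, hA, hB, hG⟩ := exists_sobG_le (F := Phi φ) (by linarith) (by linarith)
    (by linarith) hN hμ hμ0 hμ1 hPhinv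
  have hN0 : 0 < N := by linarith
  obtain ⟨c, hc, hc_le⟩ := exists_mul_rpow_le_of_le_mul_rpow_add
    (sub_pos.2 ((inv_lt_inv₀ hN0 (by linarith)).2 hN))
    (sub_le_sub_right ((inv_le_inv₀ (by linarith) (by linarith)).2 hℓm) _) hA hB
    fun t ht => ⟨(hPhistar t ht).1, by simpa only [(hPhistar t ht).2] using hG _ (hPhistar t ht).1⟩
  have hexp : (ℓ⁻¹ - N⁻¹)⁻¹ = lstar := by
    rw [hlstar]
    field_simp
  rw [hexp] at hc_le
  have := (tendsto_rpow_div_of_mul_rpow_le hc hrl hc_le).const_mul (lam ^ r)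
  rw [mul_zero] at this
  refine this.congr' ?_
  filter_upwards [eventually_ge_atTop 0] with t ht
  rw [mul_rpow hlam.le ht, mul_div_assoc]

/-- for every `1 ≤ r < ℓ*` and `λ > 0`, `(λt)^r / Φ*(t) → 0` as `t → ∞`;
i.e. the N-function `Ψ(t) = t^r/r` grows essentially more slowly than the Sobolev
conjugate `Φ*`. -/
theorem stmt_17 (φ : ℝ → ℝ) (ℓ m : ℝ)
    (hφ_pos : ∀ t > 0, 0 < φ t)
    (hφ_C2 : ContDiffOn ℝ 2 φ (Set.Ioi 0))
    (hℓ : 1 < ℓ) (hℓm : ℓ ≤ m)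
    (hφ1₀ : Tendsto (fun t => t * φ t) (nhdsWithin 0 (Set.Ioi 0)) (nhds 0))
    (hφ1top : Tendsto (fun t => t * φ t) atTop atTop)
    (hφ2 : StrictMonoOn (fun t => t * φ t) (Set.Ioi 0))
    (hφ3 : ∀ t > 0,
      (ℓ - 2) * deriv (fun s => s * φ s) t ≤ t * deriv (deriv (fun s => s * φ s)) t ∧
      t * deriv (deriv (fun s => s * φ s)) t ≤ (m - 2) * deriv (fun s => s * φ s) t)
    (N : ℝ) (hN : m < N)
    (Phinv : ℝ → ℝ)
    (hPhinv : ∀ s ∈ Set.Ici (0:ℝ), 0 ≤ Phinv s ∧ Phi φ (Phinv s) = s)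
    (hPhinv2 : ∀ t ∈ Set.Ici (0:ℝ), Phinv (Phi φ t) = t)
    (Phistar : ℝ → ℝ)
    (hPhistar : ∀ t ∈ Set.Ici (0:ℝ), 0 ≤ Phistar t ∧ sobG Phinv N (Phistar t) = t)
    (hPhistar2 : ∀ t ∈ Set.Ici (0:ℝ), Phistar (sobG Phinv N t) = t)
    (lstar : ℝ) (hlstar : lstar = ℓ * N / (N - ℓ)) :
    ∀ r : ℝ, 1 ≤ r → r < lstar → ∀ lam : ℝ, 0 < lam →
      Tendsto (fun t => (lam * t) ^ r / Phistar t) atTop (nhds 0) :=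
  stmt_17_general φ ℓ m hφ_pos hφ_C2 hℓ hℓm hφ1₀ hφ2 hφ3 N hN Phinv hPhinv Phistar hPhistar lstar
    hlstar
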